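/- arXiv:1911.04681 — 4 statements merged into one kernel-verified Lean document; each statement's English description precedes it below -/
import Mathlib

section
/- Let A ∈ ℝ^{n×n} be a matrix with zero diagonal (A_{ii} = 0 for every i), and let δ ≥ 0. Then sup over x ∈ ℝⁿ with ‖x‖∞ ≤ δ of xᵀAx equals δ² times the maximum over y ∈ {−1,1}ⁿ of yᵀAy. -/
/-!
Because `A` has zero diagonal, `xᵀAx` is affine in each coordinate separately, so moving one
coordinate at a time to whichever endpoint `±δ` does not decrease it. Every point of the box is
thus dominated by a vertex `δ • s` with `s ∈ {-1, 1}ⁿ`, where the form equals `δ² sᵀAs`.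
-/

open Finset

namespace QuadraticMap

theorem map_add_smul_of_eq_zero {R M : Type*} [CommRing R] [AddCommGroup M] [Module R M]
    (Q : QuadraticMap R M R) {v : M} (hv : Q v = 0) (x : M) (t : R) :
    Q (x + t • v) = Q x + t * polar Q x v := by
  have h := polar_smul_right Q t x v
  simp only [polar, QuadraticMap.map_smul, hv, smul_eq_mul, mul_zero, sub_zero] at h ⊢
  linear_combination h

variable {ι : Type*} [DecidableEq ι] (Q : QuadraticMap ℝ (ι → ℝ) ℝ) {δ : ℝ}

theorem exists_abs_eq_le_update {k : ι} (hk : Q (Pi.single k 1) = 0) {x : ι → ℝ}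
    (hxk : |x k| ≤ δ) : ∃ t, |t| = δ ∧ Q x ≤ Q (Function.update x k t) := by
  have hδ : 0 ≤ δ := (abs_nonneg _).trans hxk
  have hline (t : ℝ) :
      Q (Function.update x k t) = Q x + (t - x k) * polar Q x (Pi.single k 1) := by
    rw [← map_add_smul_of_eq_zero Q hk]
    congr 1
    ext i
    rcases eq_or_ne i k with rfl | hi <;> simp [*]
  obtain ⟨hlo, hhi⟩ := abs_le.1 hxk
  rcases le_total 0 (polar Q x (Pi.single k 1)) with hc | hc
  · exact ⟨δ, abs_of_nonneg hδ, by rw [hline]; nlinarith⟩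
  · exact ⟨-δ, by rw [abs_neg, abs_of_nonneg hδ], by rw [hline]; nlinarith⟩

theorem exists_forall_abs_eq_le [Fintype ι] (hQ : ∀ k, Q (Pi.single k 1) = 0) {x : ι → ℝ}
    (hx : ∀ i, |x i| ≤ δ) : ∃ y : ι → ℝ, (∀ i, |y i| = δ) ∧ Q x ≤ Q y := by
  suffices ∀ S : Finset ι, ∃ y : ι → ℝ, (∀ i, |y i| ≤ δ) ∧ (∀ i ∈ S, |y i| = δ) ∧ Q x ≤ Q y by
    obtain ⟨y, -, hy, hxy⟩ := this univ
    exact ⟨y, fun i => hy i (mem_univ i), hxy⟩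
  intro S
  induction S using Finset.induction_on with
  | empty => exact ⟨x, hx, by simp, le_rfl⟩
  | @insert k S _ ih =>
    obtain ⟨y, hy, hyS, hxy⟩ := ih
    obtain ⟨t, ht, hyt⟩ := exists_abs_eq_le_update Q (hQ k) (hy k)
    refine ⟨Function.update y k t, fun i => ?_, fun i hi => ?_, hxy.trans hyt⟩
    · rcases eq_or_ne i k with rfl | hik
      · simp [ht]
      · simp [hik, hy i]
    · rcases eq_or_ne i k with rfl | hik
      · simp [ht]
      · simpa [hik] using hyS i ((mem_insert.1 hi).resolve_left hik)

end QuadraticMap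

namespace Matrix

variable {ι : Type*} [Fintype ι] [DecidableEq ι] {R : Type*} [CommRing R]

theorem toQuadraticForm'_apply (A : Matrix ι ι R) (x : ι → R) :
    A.toQuadraticForm' x = ∑ i, ∑ j, A i j * x i * x j := by
  simp only [toQuadraticForm', LinearMap.BilinMap.toQuadraticMap_apply, toLinearMap₂'_apply,
    smul_eq_mul]
  exact sum_congr rfl fun i _ => sum_congr rfl fun j _ => by ring

theorem toQuadraticForm'_single (A : Matrix ι ι R) (i : ι) :
    A.toQuadraticForm' (Pi.single i 1) = A i i := by
  simp [toQuadraticForm'_apply, Pi.single_apply]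

end Matrix

/-- For a matrix `A` with zero diagonal and `δ ≥ 0`, the supremum of the
quadratic form `xᵀAx` over the closed ℓ∞ ball of radius `δ` equals `δ²` times the
maximum of `yᵀAy` over `y ∈ {−1,1}ⁿ`. Here `Fin n → ℝ` carries the sup norm,
the hypothesis `hmax` states that `M` is the maximum of the quadratic form over the
hypercube `{−1,1}ⁿ`, and the conclusion states that `δ² · M` is the least upper bound
of the values of the quadratic form over the ℓ∞ ball of radius `δ`. -/
theorem stmt_2 {n : ℕ} (A : Matrix (Fin n) (Fin n) ℝ) (hdiag : ∀ i, A i i = 0)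
    (δ : ℝ) (hδ : 0 ≤ δ) (M : ℝ)
    (hmax : IsGreatest
      {v : ℝ | ∃ y : Fin n → ℝ, (∀ i, y i = 1 ∨ y i = -1) ∧
        v = ∑ i, ∑ j, A i j * y i * y j} M) :
    IsLUB {v : ℝ | ∃ x : Fin n → ℝ, ‖x‖ ≤ δ ∧ v = ∑ i, ∑ j, A i j * x i * x j}
      (δ ^ 2 * M) := by
  simp only [← Matrix.toQuadraticForm'_apply] at hmax ⊢
  set Q := A.toQuadraticForm'
  have hball (x : Fin n → ℝ) : ‖x‖ ≤ δ ↔ ∀ i, |x i| ≤ δ := by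
    simp [pi_norm_le_iff_of_nonneg hδ]
  have hscale (s : Fin n → ℝ) : Q (δ • s) = δ ^ 2 * Q s := by
    rw [QuadraticMap.map_smul, smul_eq_mul, sq]
  obtain ⟨⟨s₀, hs₀, rfl⟩, hM⟩ := hmax
  refine IsGreatest.isLUB ⟨⟨δ • s₀, (hball _).2 fun i => ?_, (hscale s₀).symm⟩, ?_⟩
  · rcases hs₀ i with h | h <;> simp [h, abs_of_nonneg hδ]
  rintro _ ⟨x, hx, rfl⟩
  obtain ⟨y, hy, hxy⟩ := Q.exists_forall_abs_eq_le
    (fun k => (A.toQuadraticForm'_single k).trans (hdiag k)) ((hball x).1 hx)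
  set s : Fin n → ℝ := fun i => if 0 ≤ y i then 1 else -1
  have hs : ∀ i, s i = 1 ∨ s i = -1 := fun i => by by_cases h : 0 ≤ y i <;> simp [s, h]
  have hys : y = δ • s := by
    ext i
    rw [← hy i]
    by_cases h : 0 ≤ y i <;> simp [s, h, abs_of_nonneg, abs_of_neg, not_le.1]
  calc Q x ≤ Q y := hxy
    _ = δ ^ 2 * Q s := by rw [hys, hscale]
    _ ≤ δ ^ 2 * Q s₀ := by gcongr; exact hM ⟨s, hs, rfl⟩
end

section
/- Let A ∈ ℝ^{n×n} be symmetric with zero diagonal, let δ > 0, and let p(x) = xᵀAx. Suppose x* ∈ ℝⁿ satisfies |⟨A_i, x*⟩| ≥ δ·‖A_i‖₁ for every i ∈ [n], where A_i is the i-th row of A. Let s ∈ {−1,1}ⁿ be defined by s_i = +1 if ⟨A_i, x*⟩ ≥ 0 and s_i = −1 otherwise. Then: (i) for every (x, z) ∈ ℝⁿ × ℝ with ‖x − (x* − δs)‖∞ ≤ δ and |z − (p(x*) + δ)| ≤ δ, one has z ≥ xᵀAx; and (ii) for every (x, z) ∈ ℝⁿ × ℝ with ‖x − (x* + δs)‖∞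 ≤ δ and |z − (p(x*) − δ)| ≤ δ, one has z ≤ xᵀAx. -/
/-! Write `x = x* + u` and `r = A x*`, so that `xᵀAx = p(x*) + 2⟨u, r⟩ + uᵀAu`. On the first
ball every coordinate of `u` has size at most `2δ` and sign opposite to that of `rᵢ`, so
`⟨u, r⟩ = -∑ |uᵢ| |rᵢ|`, while `|uᵀAu| ≤ 2δ ∑ |uᵢ| ‖Aᵢ‖₁ ≤ 2 ∑ |uᵢ| |rᵢ|` by the hypothesis on
`x*`. Hence `xᵀAx ≤ p(x*) ≤ z`. On the second ball `x = x* - u` with `u` of the same kind, and the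
same two estimates give `xᵀAx ≥ p(x*) ≥ z`. -/

open Matrix Finset

variable {ι : Type*} [Fintype ι]

lemma sum_sum_mul_mul_eq_dotProduct_mulVec (A : Matrix ι ι ℝ) (x : ι → ℝ) :
    ∑ i, ∑ j, A i j * x i * x j = x ⬝ᵥ A *ᵥ x := by
  simp only [dotProduct, mulVec, mul_sum]
  exact sum_congr rfl fun i _ => sum_congr rfl fun j _ => by ring

lemma Matrix.IsSymm.add_dotProduct_mulVec_add {A : Matrix ι ι ℝ} (hA : A.IsSymm)
    (v u : ι → ℝ) :
    (v + u) ⬝ᵥ A *ᵥ (v + u) = v ⬝ᵥ A *ᵥ v + 2 * (u ⬝ᵥ A *ᵥ v) + u ⬝ᵥ A *ᵥ u := by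
  have hvu : v ⬝ᵥ A *ᵥ u = u ⬝ᵥ A *ᵥ v := by
    rw [dotProduct_mulVec, ← mulVec_transpose, hA.eq, dotProduct_comm]
  simp only [mulVec_add, add_dotProduct, dotProduct_add, hvu]
  ring

lemma abs_dotProduct_mulVec_self_le (A : Matrix ι ι ℝ) {u : ι → ℝ} {c : ℝ}
    (hu : ∀ i, |u i| ≤ c) :
    |u ⬝ᵥ A *ᵥ u| ≤ c * ∑ i, |u i| * ∑ j, |A i j| := by
  rw [← sum_sum_mul_mul_eq_dotProduct_mulVec, mul_sum]
  refine (abs_sum_le_sum_abs _ _).trans (sum_le_sum fun i _ => ?_)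
  rw [mul_sum, mul_sum]
  refine (abs_sum_le_sum_abs _ _).trans (sum_le_sum fun j _ => ?_)
  rw [abs_mul, abs_mul]
  calc |A i j| * |u i| * |u j| ≤ |A i j| * |u i| * c := by gcongr; exact hu j
    _ = c * (|u i| * |A i j|) := by ring

lemma abs_dotProduct_mulVec_self_le_neg_two_mul (A : Matrix ι ι ℝ) {δ : ℝ} {v u : ι → ℝ}
    (hv : ∀ i, δ * ∑ j, |A i j| ≤ |(A *ᵥ v) i|) (hu : ∀ i, |u i| ≤ 2 * δ)
    (hsign : ∀ i, u i * (A *ᵥ v) i ≤ 0) :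
    |u ⬝ᵥ A *ᵥ u| ≤ -(2 * (u ⬝ᵥ A *ᵥ v)) := by
  have hlin : u ⬝ᵥ A *ᵥ v = -∑ i, |u i| * |(A *ᵥ v) i| := by
    rw [dotProduct, ← sum_neg_distrib]
    refine sum_congr rfl fun i _ => ?_
    rw [← abs_mul, abs_of_nonpos (hsign i), neg_neg]
  calc |u ⬝ᵥ A *ᵥ u| ≤ 2 * δ * ∑ i, |u i| * ∑ j, |A i j| := abs_dotProduct_mulVec_self_le A hu
    _ = 2 * ∑ i, |u i| * (δ * ∑ j, |A i j|) := by
        rw [mul_sum, mul_sum]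
        exact sum_congr rfl fun i _ => by ring
    _ ≤ 2 * ∑ i, |u i| * |(A *ᵥ v) i| := by gcongr with i; exact hv i
    _ = -(2 * (u ⬝ᵥ A *ᵥ v)) := by rw [hlin]; ring

lemma abs_le_two_mul_and_mul_nonpos_of_norm_add_smul_le {δ : ℝ} {r s u : ι → ℝ}
    (hs : ∀ i, s i = if 0 ≤ r i then 1 else -1) (hu : ‖u + δ • s‖ ≤ δ) (i : ι) :
    |u i| ≤ 2 * δ ∧ u i * r i ≤ 0 := by
  have hi : |u i + δ * s i| ≤ δ := by
    simpa using (norm_le_pi_norm (u + δ • s) i).trans hu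
  obtain ⟨hlo, hhi⟩ := abs_le.1 hi
  rw [hs i] at hlo hhi
  split_ifs at hlo hhi with hr
  · exact ⟨abs_le.2 ⟨by linarith, by linarith⟩, mul_nonpos_of_nonpos_of_nonneg (by linarith) hr⟩
  · exact ⟨abs_le.2 ⟨by linarith, by linarith⟩,
      mul_nonpos_of_nonneg_of_nonpos (by linarith) (by linarith)⟩

theorem stmt_10_general {n : ℕ} (A : Matrix (Fin n) (Fin n) ℝ) (hsymm : A.IsSymm)
    (δ : ℝ) (xstar : Fin n → ℝ)
    (hx : ∀ i, δ * (∑ j, |A i j|) ≤ |∑ j, A i j * xstar j|)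
    (s : Fin n → ℝ)
    (hs : ∀ i, s i = if 0 ≤ ∑ j, A i j * xstar j then 1 else -1) :
    (∀ (x : Fin n → ℝ) (z : ℝ),
      ‖x - (xstar - δ • s)‖ ≤ δ →
      |z - ((∑ i, ∑ j, A i j * xstar i * xstar j) + δ)| ≤ δ →
      (∑ i, ∑ j, A i j * x i * x j) ≤ z) ∧
    (∀ (x : Fin n → ℝ) (z : ℝ),
      ‖x - (xstar + δ • s)‖ ≤ δ →
      |z - ((∑ i, ∑ j, A i j * xstar i * xstar j) - δ)| ≤ δ →
      z ≤ ∑ i, ∑ j, A i j * x i * x j) := by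
  simp only [sum_sum_mul_mul_eq_dotProduct_mulVec]
  change ∀ i, δ * _ ≤ |(A *ᵥ xstar) i| at hx
  change ∀ i, s i = if 0 ≤ (A *ᵥ xstar) i then 1 else -1 at hs
  have hquad {u : Fin n → ℝ} (hu : ‖u + δ • s‖ ≤ δ) :
      |u ⬝ᵥ A *ᵥ u| ≤ -(2 * (u ⬝ᵥ A *ᵥ xstar)) :=
    abs_dotProduct_mulVec_self_le_neg_two_mul A hx
      (fun i => (abs_le_two_mul_and_mul_nonpos_of_norm_add_smul_le hs hu i).1)
      (fun i => (abs_le_two_mul_and_mul_nonpos_of_norm_add_smul_le hs hu i).2)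
  constructor
  · intro x z hxball hz
    have hu := hquad (u := x - xstar) <| by
      rwa [show x - xstar + δ • s = x - (xstar - δ • s) by abel]
    rw [← add_sub_cancel xstar x, hsymm.add_dotProduct_mulVec_add]
    linarith [(abs_le.1 hz).1, (abs_le.1 hu).2]
  · intro x z hxball hz
    have hu := hquad (u := xstar - x) <| by
      rwa [show xstar - x + δ • s = -(x - (xstar + δ • s)) by abel, norm_neg]
    rw [show x = xstar + -(xstar - x) by abel, hsymm.add_dotProduct_mulVec_add]
    simp only [mulVec_neg, dotProduct_neg, neg_dotProduct, neg_neg]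
    linarith [(abs_le.1 hz).2, (abs_le.1 hu).1]

/-- Let `A` be symmetric with zero diagonal, `p(x) = xᵀAx`, and suppose
`x*` satisfies `|⟨Aᵢ,x*⟩| ≥ δ·‖Aᵢ‖₁` for every row `Aᵢ`. With
`sᵢ = sgn(⟨Aᵢ,x*⟩)`, the PTF `sgn(z − xᵀAx)` does not change sign on the ℓ∞ ball of
radius `δ` around either `(x* − δs, p(x*) + δ)` (where `z ≥ xᵀAx`) or
`(x* + δs, p(x*) − δ)` (where `z ≤ xᵀAx`). `Fin n → ℝ` carries the sup norm. -/
theorem stmt_10 {n : ℕ} (A : Matrix (Fin n) (Fin n) ℝ) (hsymm : A.IsSymm)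
    (hdiag : ∀ i, A i i = 0) (δ : ℝ) (hδ : 0 < δ) (xstar : Fin n → ℝ)
    (hx : ∀ i, δ * (∑ j, |A i j|) ≤ |∑ j, A i j * xstar j|)
    (s : Fin n → ℝ)
    (hs : ∀ i, s i = if 0 ≤ ∑ j, A i j * xstar j then 1 else -1) :
    (∀ (x : Fin n → ℝ) (z : ℝ),
      ‖x - (xstar - δ • s)‖ ≤ δ →
      |z - ((∑ i, ∑ j, A i j * xstar i * xstar j) + δ)| ≤ δ →
      (∑ i, ∑ j, A i j * x i * x j) ≤ z) ∧
    (∀ (x : Fin n → ℝ) (z : ℝ),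
      ‖x - (xstar + δ • s)‖ ≤ δ →
      |z - ((∑ i, ∑ j, A i j * xstar i * xstar j) - δ)| ≤ δ →
      z ≤ ∑ i, ∑ j, A i j * x i * x j) :=
  stmt_10_general A hsymm δ xstar hx s hs
end

section
/- Let n ≥ 1, let A* ∈ ℝ^{n×n} be a nonzero symmetric matrix with zero diagonal, let ρ > 0, and let m > (n+1)². Let x^{(1)}, …, x^{(m)} be independent random vectors each distributed as N(0,ρ²)ⁿ, and set z^{(ℓ)} = (x^{(ℓ)})ᵀ A* x^{(ℓ)}. Then almost surely the following holds: every polynomial q in n+1 real variables (x₁,…,x_n,z) of total degree at most 2 satisfying q(x^{(ℓ)}, z^{(ℓ)}) = 0 for all ℓ ∈ [m] is of the form q(x, z) = C·(z − xᵀA*x) for some constant C ∈ ℝ. -/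
/-!
A nonzero real polynomial vanishes only on a null set of any product of absolutely continuous
measures (Fubini and induction on the number of variables). Consequently, for almost every
sample `x⁽¹⁾, …, x⁽ᵐ⁾`, evaluation at the sample points is injective on every fixed space `W` of
polynomials with `dim W ≤ m`: for a basis `g` of `W`, the determinant `det (gᵢ(x⁽ʲ⁾))` is a
polynomial in the sample which is not identically zero, since linearly independent functions
admit points with an invertible evaluation matrix.

Substituting `z = xᵀA*x` into a polynomial `q(x, z)` of degree at most 2 lands in the span of the
`(n+1)² + 1 ≤ m` polynomials `1, xᵢ, xᵢxⱼ, (xᵀA*x)·xᵢ, (xᵀA*x)²`. Hence almost surely a `q`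
vanishing at all sample points has `q(x, xᵀA*x) = 0` as a polynomial. Its homogeneous components
of degrees `0, …, 4` then vanish separately; as `xᵀA*x` is a nonzero polynomial when `A*` is
symmetric, nonzero and has zero diagonal, this forces `q = c₃·(z − xᵀA*x)`.
-/

open MeasureTheory ProbabilityTheory

/-- The general polynomial of total degree at most 2 in the `n+1` variables `(x, z)`:
`q(x,z) = xᵀBx + b₁·x + c₁ + z·(b₂·x) + c₂z² + c₃z`. -/
noncomputable def deg2Poly {n : ℕ} (B : Matrix (Fin n) (Fin n) ℝ)
    (b₁ b₂ : Fin n → ℝ) (c₁ c₂ c₃ : ℝ) (x : Fin n → ℝ) (z : ℝ) : ℝ :=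
  (∑ i, ∑ j, B i j * x i * x j) + (∑ i, b₁ i * x i) + c₁ +
    z * (∑ i, b₂ i * x i) + c₂ * z ^ 2 + c₃ * z

theorem Polynomial.ae_eval_ne_zero {ν : Measure ℝ} (hν : ν ≪ volume) {p : Polynomial ℝ}
    (hp : p ≠ 0) : ∀ᵐ t ∂ν, p.eval t ≠ 0 := by
  rw [ae_iff]
  push Not
  exact hν ((Polynomial.finite_setOfPred_isRoot hp).countable.measure_zero _)

theorem MeasureTheory.Measure.map_uncurry_pi_pi {τ σ α : Type*} [Fintype τ] [Fintype σ]
    [MeasurableSpace α] (μ : τ → σ → Measure α) [∀ i j, SigmaFinite (μ i j)] :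
    (Measure.pi fun i : τ => Measure.pi fun j : σ => μ i j).map
        (MeasurableEquiv.curry τ σ α).symm =
      Measure.pi fun p : τ × σ => μ p.1 p.2 := by
  refine (Measure.pi_eq fun s _ => ?_).symm
  rw [MeasurableEquiv.map_apply]
  have : (MeasurableEquiv.curry τ σ α).symm ⁻¹' Set.univ.pi s =
      Set.univ.pi fun i => Set.univ.pi fun j => s (i, j) := by
    ext X
    simp [MeasurableEquiv.coe_curry_symm, Set.mem_pi, Prod.forall]
  simp_rw [this, Measure.pi_pi, Fintype.prod_prod_type]

theorem exists_det_ne_zero_of_linearIndependent {K α κ : Type*} [Field K] [Fintype κ]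
    [DecidableEq κ] {f : κ → α → K} (hf : LinearIndependent K f) :
    ∃ y : κ → α, (Matrix.of fun i j => f i (y j)).det ≠ 0 := by
  set v : α → κ → K := fun a i => f i a
  have hspan : Submodule.span K (Set.range v) = ⊤ := by
    by_contra h
    obtain ⟨φ, hφ, hle⟩ := (Submodule.span K (Set.range v)).exists_le_ker_of_lt_top
      (lt_top_iff_ne_top.mpr h)
    -- a functional vanishing on every `v a` is a linear relation among the `f i`
    have hc := Fintype.linearIndependent_iff.mp hf
      (fun i => φ fun j => if i = j then 1 else 0) <| by
        funext a
        have := hle (Submodule.subset_span ⟨a, rfl⟩)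
        rw [LinearMap.mem_ker, LinearMap.pi_apply_eq_sum_univ] at this
        simpa [v, mul_comm] using this
    refine hφ (LinearMap.ext fun x => ?_)
    simp [LinearMap.pi_apply_eq_sum_univ φ x, hc]
  obtain ⟨ι, a, -, hspan', hli⟩ := exists_linearIndependent' K v
  let b := Module.Basis.mk hli (by rw [hspan', hspan])
  let e : κ ≃ ι := (Pi.basisFun K κ).indexEquiv b
  refine ⟨a ∘ e, ?_⟩
  have : LinearIndependent K (Matrix.of fun i j => f i (a (e j))).col :=
    hli.comp e e.injective
  exact ((Matrix.linearIndependent_cols_iff_isUnit.mp this).map Matrix.detMonoidHom).ne_zero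

namespace MvPolynomial

theorem ae_eval_ne_zero {σ : Type*} [Fintype σ] {ν : Measure ℝ} [SigmaFinite ν]
    (hν : ν ≪ volume) {Q : MvPolynomial σ ℝ} (hQ : Q ≠ 0) :
    ∀ᵐ x ∂Measure.pi (fun _ : σ => ν), eval x Q ≠ 0 := by
  revert Q
  refine Fintype.induction_empty_option (P := fun σ _ => ∀ {Q : MvPolynomial σ ℝ}, Q ≠ 0 →
    ∀ᵐ x ∂Measure.pi (fun _ : σ => ν), eval x Q ≠ 0) ?_ ?_ ?_ σ
  · intro α β _ e IH Q hQ
    let : Fintype α := Fintype.ofEquiv β e.symm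
    rw [← (measurePreserving_piCongrLeft (fun _ : β => ν) e).map_eq,
      (MeasurableEquiv.measurableEmbedding _).ae_map_iff]
    have hQ' : rename e.symm Q ≠ 0 :=
      fun h => hQ (rename_injective _ e.symm.injective (by simpa using h))
    filter_upwards [IH hQ'] with x hx
    convert hx using 2
    rw [eval_rename]
    congr 2
    funext b
    obtain ⟨a, rfl⟩ := e.surjective b
    simp [MeasurableEquiv.piCongrLeft_apply_apply]
  · intro Q hQ
    refine Filter.Eventually.of_forall fun x => ?_
    rw [eq_C_of_isEmpty Q] at hQ ⊢
    simpa using hQ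
  · intro α _ IH Q hQ
    rw [← Measure.pi_map_piOptionEquivProd (fun _ : Option α => ν),
      (MeasurableEquiv.measurableEmbedding _).ae_map_iff]
    have hmeas : MeasurableSet {p : (α → ℝ) × ℝ |
        eval ((MeasurableEquiv.piOptionEquivProd fun _ => ℝ).symm p) Q ≠ 0} :=
      ((continuous_eval Q).measurable.comp (MeasurableEquiv.measurable _))
        (measurableSet_singleton 0).compl
    rw [Measure.ae_prod_iff_ae_ae hmeas]
    -- for a.e. `x` the leading coefficient in the extra variable survives at `x`
    set P := optionEquivLeft ℝ α Q
    have hP : P ≠ 0 := (map_ne_zero_iff _ (optionEquivLeft ℝ α).injective).mpr hQ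
    filter_upwards [IH (Polynomial.leadingCoeff_ne_zero.mpr hP)] with x hx
    have hPx : P.map (eval x) ≠ 0 := fun h =>
      hx (by simpa using congrArg (Polynomial.coeff · P.natDegree) h)
    filter_upwards [Polynomial.ae_eval_ne_zero hν hPx] with t ht
    rw [← optionEquivLeft_elim_eval] at ht
    convert ht using 3
    funext o
    cases o <;> rfl

theorem ae_eval_uncurry_ne_zero {τ σ : Type*} [Fintype τ] [Fintype σ] {ν : Measure ℝ}
    [SigmaFinite ν] (hν : ν ≪ volume) {Q : MvPolynomial (τ × σ) ℝ} (hQ : Q ≠ 0) :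
    ∀ᵐ X ∂Measure.pi (fun _ : τ => Measure.pi fun _ : σ => ν),
      eval (Function.uncurry X) Q ≠ 0 := by
  have h := ae_eval_ne_zero hν hQ
  rwa [← Measure.map_uncurry_pi_pi (fun _ _ => ν),
    (MeasurableEquiv.measurableEmbedding _).ae_map_iff] at h

theorem ae_det_eval_ne_zero {τ σ κ : Type*} [Fintype τ] [Fintype σ] [Fintype κ]
    [DecidableEq κ] {ν : Measure ℝ} [SigmaFinite ν] (hν : ν ≪ volume)
    {g : κ → MvPolynomial σ ℝ} (hg : LinearIndependent ℝ g) (e : κ ↪ τ) :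
    ∀ᵐ X ∂Measure.pi (fun _ : τ => Measure.pi fun _ : σ => ν),
      (Matrix.of fun i j => eval (X (e j)) (g i)).det ≠ 0 := by
  have hg' : LinearIndependent ℝ fun i (x : σ → ℝ) => eval x (g i) := by
    refine Fintype.linearIndependent_iff.mpr fun c hc =>
      Fintype.linearIndependent_iff.mp hg c (MvPolynomial.funext fun x => ?_)
    simpa using congrFun hc x
  obtain ⟨y, hy⟩ := exists_det_ne_zero_of_linearIndependent hg'
  let D : MvPolynomial (τ × σ) ℝ := (Matrix.of fun i j => rename (Prod.mk (e j)) (g i)).det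
  have hD : ∀ X : τ → σ → ℝ, eval (Function.uncurry X) D =
      (Matrix.of fun i j => eval (X (e j)) (g i)).det := by
    intro X
    rw [RingHom.map_det]
    congr 1
    ext i j
    simp [eval_rename, Function.comp_def]
  have hD0 : D ≠ 0 := by
    intro h
    apply hy
    simpa [h, e.injective.extend_apply] using (hD (Function.extend e y 0)).symm
  filter_upwards [ae_eval_uncurry_ne_zero hν hD0] with X hX
  rwa [hD] at hX

theorem ae_eq_zero_of_forall_eval_eq_zero {τ σ : Type*} [Fintype τ] [Fintype σ]
    {ν : Measure ℝ} [SigmaFinite ν] (hν : ν ≪ volume) (W : Submodule ℝ (MvPolynomial σ ℝ))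
    [FiniteDimensional ℝ W] (hW : Module.finrank ℝ W ≤ Fintype.card τ) :
    ∀ᵐ X ∂Measure.pi (fun _ : τ => Measure.pi fun _ : σ => ν),
      ∀ p ∈ W, (∀ ℓ, eval (X ℓ) p = 0) → p = 0 := by
  let b := Module.finBasis ℝ W
  obtain ⟨e⟩ : Nonempty (Fin (Module.finrank ℝ W) ↪ τ) :=
    Function.Embedding.nonempty_of_card_le (by simpa using hW)
  have hb : LinearIndependent ℝ fun i => (b i : MvPolynomial σ ℝ) :=
    b.linearIndependent.map' W.subtype W.ker_subtype
  filter_upwards [ae_det_eval_ne_zero hν hb e] with X hX p hp hvan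
  obtain ⟨c, hsum⟩ : ∃ c : Fin _ → ℝ, ∑ i, c i • (b i : MvPolynomial σ ℝ) = p :=
    ⟨b.repr ⟨p, hp⟩, by simp_rw [← Submodule.coe_smul, ← Submodule.coe_sum, b.sum_repr]⟩
  have hc : Matrix.vecMul c (Matrix.of fun i j => eval (X (e j)) (b i : MvPolynomial σ ℝ)) =
      Matrix.vecMul 0 (Matrix.of fun i j => eval (X (e j)) (b i : MvPolynomial σ ℝ)) := by
    funext j
    simp only [Matrix.vecMul, dotProduct, Matrix.of_apply, Pi.zero_apply, zero_mul,
      Finset.sum_const_zero]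
    rw [← hvan (e j), ← hsum]
    simp
  have hc0 := Matrix.vecMul_injective_iff_isUnit.mpr
    ((Matrix.isUnit_iff_isUnit_det _).mpr (Ne.isUnit hX)) hc
  simp [← hsum, hc0]

section QuadraticSubstitution

variable {σ R : Type*} [Fintype σ] [CommRing R]

noncomputable def quadForm (B : Matrix σ σ R) : MvPolynomial σ R :=
  ∑ i, ∑ j, C (B i j) * X i * X j

noncomputable def linForm (b : σ → R) : MvPolynomial σ R :=
  ∑ i, C (b i) * X i

noncomputable def deg2MvPoly (B : Matrix σ σ R) (b₁ b₂ : σ → R) (c₁ c₂ c₃ : R)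
    (Z : MvPolynomial σ R) : MvPolynomial σ R :=
  quadForm B + linForm b₁ + C c₁ + Z * linForm b₂ + C c₂ * Z ^ 2 + C c₃ * Z

@[simp]
theorem eval_quadForm (B : Matrix σ σ R) (x : σ → R) :
    eval x (quadForm B) = ∑ i, ∑ j, B i j * x i * x j := by
  simp [quadForm]

@[simp]
theorem eval_linForm (b : σ → R) (x : σ → R) : eval x (linForm b) = ∑ i, b i * x i := by
  simp [linForm]

theorem eval_deg2MvPoly {n : ℕ} (B : Matrix (Fin n) (Fin n) ℝ) (b₁ b₂ : Fin n → ℝ)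
    (c₁ c₂ c₃ : ℝ) (Z : MvPolynomial (Fin n) ℝ) (x : Fin n → ℝ) :
    eval x (deg2MvPoly B b₁ b₂ c₁ c₂ c₃ Z) = deg2Poly B b₁ b₂ c₁ c₂ c₃ x (eval x Z) := by
  simp [deg2Poly, deg2MvPoly]

theorem isHomogeneous_quadForm (B : Matrix σ σ R) : (quadForm B).IsHomogeneous 2 :=
  IsHomogeneous.sum _ _ _ fun i _ => IsHomogeneous.sum _ _ _ fun j _ =>
    (isHomogeneous_C_mul_X _ i).mul (isHomogeneous_X R j)

theorem isHomogeneous_linForm (b : σ → R) : (linForm b).IsHomogeneous 1 :=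
  IsHomogeneous.sum _ _ _ fun i _ => isHomogeneous_C_mul_X _ i

theorem quadForm_ne_zero [IsDomain R] [CharZero R] {A : Matrix σ σ R} (hsymm : A.IsSymm)
    (hdiag : ∀ i, A i i = 0) (hA : A ≠ 0) : quadForm A ≠ 0 := by
  classical
  obtain ⟨i, j, hij⟩ : ∃ i j, A i j ≠ 0 := by
    by_contra! h
    exact hA (Matrix.ext h)
  intro h
  have := congrArg (eval (Pi.single i 1 + Pi.single j 1)) h
  simp [Pi.single_apply, mul_add, Finset.sum_add_distrib, hdiag, hsymm.apply i j, hij] at this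

theorem coeffs_eq_zero_of_deg2MvPoly_quadForm_eq_zero [IsDomain R] {A B : Matrix σ σ R}
    {b₁ b₂ : σ → R} {c₁ c₂ c₃ : R} (hA : quadForm A ≠ 0)
    (h : deg2MvPoly B b₁ b₂ c₁ c₂ c₃ (quadForm A) = 0) :
    c₁ = 0 ∧ linForm b₁ = 0 ∧ quadForm B + C c₃ * quadForm A = 0 ∧ linForm b₂ = 0 ∧ c₂ = 0 := by
  have hS := isHomogeneous_quadForm A
  have hcomp : ∀ k, homogeneousComponent k (deg2MvPoly B b₁ b₂ c₁ c₂ c₃ (quadForm A)) = 0 :=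
    fun k => by rw [h, map_zero]
  simp only [deg2MvPoly, map_add,
    homogeneousComponent_of_mem (isHomogeneous_quadForm B),
    homogeneousComponent_of_mem (isHomogeneous_linForm b₁),
    homogeneousComponent_of_mem (isHomogeneous_C σ c₁),
    homogeneousComponent_of_mem (hS.mul (isHomogeneous_linForm b₂)),
    homogeneousComponent_of_mem ((hS.pow 2).C_mul c₂),
    homogeneousComponent_of_mem (hS.C_mul c₃)] at hcomp
  refine ⟨?_, ?_, ?_, ?_, ?_⟩
  · simpa using hcomp 0
  · simpa using hcomp 1
  · simpa using hcomp 2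
  · simpa [hA] using hcomp 3
  · simpa [hA] using hcomp 4

/-- The monomial `z` is left out: `quadForm A` already lies in the span of the `X i * X j`. -/
noncomputable def quadFormSubstMonomial (A : Matrix σ σ R) :
    Unit ⊕ σ ⊕ (σ × σ) ⊕ σ ⊕ Unit → MvPolynomial σ R
  | .inl _ => 1
  | .inr (.inl i) => X i
  | .inr (.inr (.inl p)) => X p.1 * X p.2
  | .inr (.inr (.inr (.inl i))) => quadForm A * X i
  | .inr (.inr (.inr (.inr _))) => quadForm A ^ 2

theorem deg2MvPoly_mem_span (A B : Matrix σ σ R) (b₁ b₂ : σ → R) (c₁ c₂ c₃ : R) :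
    deg2MvPoly B b₁ b₂ c₁ c₂ c₃ (quadForm A) ∈
      Submodule.span R (Set.range (quadFormSubstMonomial A)) := by
  refine (Submodule.mem_span_range_iff_exists_fun R).mpr ⟨Sum.elim (fun _ => c₁) <|
    Sum.elim b₁ <| Sum.elim (fun p => B p.1 p.2 + c₃ * A p.1 p.2) <| Sum.elim b₂ fun _ => c₂, ?_⟩
  have hquad : ∑ i, ∑ j, C (B i j + c₃ * A i j) * (X i * X j) =
      quadForm B + C c₃ * quadForm A := by
    simp only [quadForm, Finset.mul_sum, ← Finset.sum_add_distrib, map_add, map_mul]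
    exact Finset.sum_congr rfl fun i _ => Finset.sum_congr rfl fun j _ => by ring
  have hcubic : ∑ i, C (b₂ i) * (quadForm A * X i) = quadForm A * linForm b₂ := by
    simp only [linForm, Finset.mul_sum]
    exact Finset.sum_congr rfl fun i _ => by ring
  simp only [Fintype.sum_sum_type, Fintype.sum_prod_type, Sum.elim_inl, Sum.elim_inr,
    quadFormSubstMonomial, smul_eq_C_mul, hquad, hcubic]
  simp only [deg2MvPoly, linForm, Finset.univ_unique, Finset.sum_singleton, mul_one]
  ring

end QuadraticSubstitution

end MvPolynomial

open MvPolynomial in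
theorem deg2Poly_eq_of_deg2MvPoly_quadForm_eq_zero {n : ℕ} {A B : Matrix (Fin n) (Fin n) ℝ}
    {b₁ b₂ : Fin n → ℝ} {c₁ c₂ c₃ : ℝ} (hA : quadForm A ≠ 0)
    (h : deg2MvPoly B b₁ b₂ c₁ c₂ c₃ (quadForm A) = 0) (x : Fin n → ℝ) (z : ℝ) :
    deg2Poly B b₁ b₂ c₁ c₂ c₃ x z = c₃ * (z - ∑ i, ∑ j, A i j * x i * x j) := by
  obtain ⟨rfl, h₁, h₂, h₃, rfl⟩ := coeffs_eq_zero_of_deg2MvPoly_quadForm_eq_zero hA h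
  have e₁ := congrArg (eval x) h₁
  have e₂ := congrArg (eval x) h₂
  have e₃ := congrArg (eval x) h₃
  simp only [eval_linForm, eval_quadForm, map_add, map_mul, eval_C, map_zero] at e₁ e₂ e₃
  simp only [deg2Poly]
  linear_combination e₂ + e₁ + z * e₃

theorem stmt_13_general {n : ℕ} (Astar : Matrix (Fin n) (Fin n) ℝ)
    (hsymm : Astar.IsSymm) (hdiag : ∀ i, Astar i i = 0) (hne : Astar ≠ 0)
    (ρ : ℝ) (hρ : 0 < ρ) (m : ℕ) (hm : (n + 1) ^ 2 < m) :
    ∀ᵐ X : Fin m → Fin n → ℝ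
      ∂(Measure.pi fun _ : Fin m =>
          Measure.pi fun _ : Fin n => gaussianReal 0 (Real.toNNReal (ρ ^ 2))),
      ∀ (B : Matrix (Fin n) (Fin n) ℝ) (b₁ b₂ : Fin n → ℝ) (c₁ c₂ c₃ : ℝ),
        (∀ ℓ : Fin m,
          deg2Poly B b₁ b₂ c₁ c₂ c₃ (X ℓ)
            (∑ i, ∑ j, Astar i j * X ℓ i * X ℓ j) = 0) →
        ∃ C : ℝ, ∀ (x : Fin n → ℝ) (z : ℝ),
          deg2Poly B b₁ b₂ c₁ c₂ c₃ x z =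
            C * (z - ∑ i, ∑ j, Astar i j * x i * x j) := by
  have hν : gaussianReal 0 (ρ ^ 2).toNNReal ≪ volume :=
    gaussianReal_absolutelyContinuous _ (by simpa using hρ.ne')
  let W := Submodule.span ℝ (Set.range (MvPolynomial.quadFormSubstMonomial Astar))
  have : FiniteDimensional ℝ W := FiniteDimensional.span_of_finite ℝ (Set.finite_range _)
  have hW : Module.finrank ℝ W ≤ Fintype.card (Fin m) := by
    refine (finrank_range_le_card _).trans ?_
    simp only [Fintype.card_sum, Fintype.card_unit, Fintype.card_prod, Fintype.card_fin]
    nlinarith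
  filter_upwards [MvPolynomial.ae_eq_zero_of_forall_eval_eq_zero hν W hW] with X hX
  intro B b₁ b₂ c₁ c₂ c₃ hvan
  refine ⟨c₃, deg2Poly_eq_of_deg2MvPoly_quadForm_eq_zero
    (MvPolynomial.quadForm_ne_zero hsymm hdiag hne) <|
    hX _ (MvPolynomial.deg2MvPoly_mem_span _ _ _ _ _ _ _) fun ℓ => ?_⟩
  rw [MvPolynomial.eval_deg2MvPoly, MvPolynomial.eval_quadForm]
  exact hvan ℓ

/-- Let `A*` be a nonzero symmetric matrix with zero diagonal and let
`x⁽¹⁾, …, x⁽ᵐ⁾` be independent `N(0,ρ²)ⁿ` vectors with `m > (n+1)²`, and set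
`z⁽ˡ⁾ = (x⁽ˡ⁾)ᵀA*x⁽ˡ⁾`. Then almost surely every polynomial `q` of total degree at
most 2 in `(x, z)` that vanishes at all the points `(x⁽ˡ⁾, z⁽ˡ⁾)` is of the form
`q(x,z) = C·(z − xᵀA*x)` for some constant `C`. -/
theorem stmt_13 {n : ℕ} (hn : 1 ≤ n) (Astar : Matrix (Fin n) (Fin n) ℝ)
    (hsymm : Astar.IsSymm) (hdiag : ∀ i, Astar i i = 0) (hne : Astar ≠ 0)
    (ρ : ℝ) (hρ : 0 < ρ) (m : ℕ) (hm : (n + 1) ^ 2 < m) :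
    ∀ᵐ X : Fin m → Fin n → ℝ
      ∂(Measure.pi fun _ : Fin m =>
          Measure.pi fun _ : Fin n => gaussianReal 0 (Real.toNNReal (ρ ^ 2))),
      ∀ (B : Matrix (Fin n) (Fin n) ℝ) (b₁ b₂ : Fin n → ℝ) (c₁ c₂ c₃ : ℝ),
        (∀ ℓ : Fin m,
          deg2Poly B b₁ b₂ c₁ c₂ c₃ (X ℓ)
            (∑ i, ∑ j, Astar i j * X ℓ i * X ℓ j) = 0) →
        ∃ C : ℝ, ∀ (x : Fin n → ℝ) (z : ℝ),
          deg2Poly B b₁ b₂ c₁ c₂ c₃ x z =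
            C * (z - ∑ i, ∑ j, Astar i j * x i * x j) :=
  stmt_13_general Astar hsymm hdiag hne ρ hρ m hm
end

section
/- There is a universal constant K > 0 such that the following holds. Let n ≥ 2, let A = (a_{i,j}) ∈ ℝ^{n×n} be symmetric with zero diagonal, and let 0 < ε < 1/10 and 0 < δ < 1/10. Write ã_{i,j} = ε + |a_{i,j}| and M = max(1, 1/(ε + min_{i≠j} |a_{i,j}|)), and suppose τ' ≥ K·(n²/ε)·M, τ ≥ K·(n/ε)·M and γ = 4nτ. Let e_i denote the i-th standard basis vector of ℝⁿ, and for i ≠ j and signs σ, σ' ∈ {−1,1} let w^{σ,σ'}_{i,j} = (σ/√(2ã_{i,j}))e_i + (σ'/√(2ã_{i,j}))e_j. Consider the labeled set S ⊂ (ℝⁿ×ℝ) × {−1,+1} consisting of: ((0,1),−1), ((0,−1),+1), ((0,τ'),−1), ((0,−τ'),+1), ((0,2δ),−1), ((0,−2δ),+1); for every i ∈ [n]: ((τe_i, γ),−1), ((τe_i, −γ),+1), ((−τe_i, γ),−1), ((−τe_i, −γ),+1); and for every i ≠ j and all σ, σ' ∈ {−1,1}: ((w^{σ,σ'}_{i,j},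 2), −1), ((2·w^{σ,σ'}_{i,j}, 1), σσ'·sgn(a_{i,j})), and ((w^{σ,σ'}_{i,j}, −2), +1). Suppose q' : ℝⁿ × ℝ → ℝ is a polynomial of total degree at most 2 that classifies S with zero error, i.e., for every labeled point (w, y) ∈ S: q'(w) ≥ 0 if y = +1 and q'(w) < 0 if y = −1. Then the coefficient c_z of the monomial z in q' satisfies c_z < 0, and writing q = q'/(−c_z) in the form q(x,z) = xᵀA'x + c₁·x + c₂z² − z + c₄ + z·(β·x) with A' symmetric, one has: |c₂| ≤ ε, |β_i| ≤ ε and |a'_{i,i}| ≤ ε for all i; |c₄| ≤ 4δ; (1/4 − δ − ε/2)·(ε + |a_{i,j}|) ≤ |a'_{i,j}| ≤ (2 + 4δ + 5ε)·(ε + |a_{i,j}|) for all i ≠ j; and |c_{1,i}| ≤ 5·√(2(ε + |a_{i,j}|)) for every i and every j ≠ i. -/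
/-!
Dividing by `-c_z`, which is positive because of the points `(0, ±1)`, normalises the
`z`-coefficient to `-1`. On the `z`-axis the points at heights `±1`, `±τ'` and `±2δ` force
`|c₂| < 1/(τ' - 1)` and `|c₄| ≤ 4δ`. At `(±τ eᵢ, ±γ)`, comparing heights `γ` and `-γ` gives
`|βᵢ| τ < 1`, and averaging over `±τ eᵢ` gives `|a'ᵢᵢ| τ² ≤ γ + |c₂| γ² + |c₄|`; the choice of
`τ, τ'` makes all of these small compared with `ε / M`. Finally, averaging `q` over two
antipodal points `± w` kills its odd part, so the points of `S₃` and `S₄` pin `a'ᵢⱼ / (2ã_{ij})`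
between about `1/8` and `1`, while two points of `S₃` with the same `σ` bound `c_{1,i}`.
-/

/-- The general polynomial of total degree at most 2 on `ℝⁿ × ℝ`:
`q'(x,z) = xᵀA''x + c₁''·x + c₂''z² + c_z·z + c₄'' + z·(β''·x)`. -/
noncomputable def q16 {n : ℕ} (A'' : Matrix (Fin n) (Fin n) ℝ) (c₁'' : Fin n → ℝ)
    (c₂'' cz c₄'' : ℝ) (β'' : Fin n → ℝ) (x : Fin n → ℝ) (z : ℝ) : ℝ :=
  (∑ i, ∑ j, A'' i j * x i * x j) + (∑ i, c₁'' i * x i) + c₂'' * z ^ 2 + cz * z +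
    c₄'' + z * (∑ i, β'' i * x i)

section Evaluation

variable {n : ℕ} (A : Matrix (Fin n) (Fin n) ℝ) (c₁ β : Fin n → ℝ) (c₂ cz c₄ : ℝ)

lemma q16_zero (z : ℝ) : q16 A c₁ c₂ cz c₄ β 0 z = c₂ * z ^ 2 + cz * z + c₄ := by
  simp [q16]

lemma q16_smul_single (i : Fin n) (t z : ℝ) :
    q16 A c₁ c₂ cz c₄ β (t • Pi.single i 1) z =
      A i i * t ^ 2 + c₁ i * t + c₂ * z ^ 2 + cz * z + c₄ + z * (β i * t) := by
  simp only [q16, Pi.smul_apply, Pi.single_apply, smul_eq_mul, mul_ite, mul_one, mul_zero,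
    ite_mul, zero_mul, Finset.sum_ite_eq', Finset.mem_univ, if_true]
  ring

lemma q16_add_smul_single (i j : Fin n) (a b z : ℝ) :
    q16 A c₁ c₂ cz c₄ β (a • Pi.single i 1 + b • Pi.single j 1) z =
      A i i * a ^ 2 + (A i j + A j i) * (a * b) + A j j * b ^ 2 + (c₁ i * a + c₁ j * b) +
        c₂ * z ^ 2 + cz * z + c₄ + z * (β i * a + β j * b) := by
  simp only [q16, Pi.add_apply, Pi.smul_apply, Pi.single_apply, smul_eq_mul, mul_ite, mul_one,
    mul_zero, mul_add, add_mul, ite_mul, zero_mul, Finset.sum_add_distrib, Finset.sum_ite_eq',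
    Finset.mem_univ, ↓reduceIte]
  ring

lemma q16_div (s : ℝ) :
    (fun x z ↦ q16 A c₁ c₂ cz c₄ β x z / s) =
      q16 (s⁻¹ • A) (s⁻¹ • c₁) (c₂ / s) (cz / s) (c₄ / s) (s⁻¹ • β) := by
  ext x z
  simp only [q16, Matrix.smul_apply, Pi.smul_apply, smul_eq_mul, div_eq_inv_mul, mul_add,
    Finset.mul_sum, mul_assoc, mul_left_comm z]

end Evaluation

lemma q16_pair {n : ℕ} {A : Matrix (Fin n) (Fin n) ℝ} (hA : A.IsSymm) (c₁ β : Fin n → ℝ)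
    (c₂ cz c₄ : ℝ) (i j : Fin n) {σ σ' : ℝ} (hσ : σ ^ 2 = 1) (hσ' : σ' ^ 2 = 1) (u z : ℝ) :
    q16 A c₁ c₂ cz c₄ β ((σ * u) • Pi.single i 1 + (σ' * u) • Pi.single j 1) z =
      (A i i + A j j) * u ^ 2 + 2 * σ * σ' * A i j * u ^ 2 + (c₁ i * σ + c₁ j * σ') * u +
        c₂ * z ^ 2 + cz * z + c₄ + z * (β i * σ + β j * σ') * u := by
  rw [q16_add_smul_single, hA.apply i j]
  linear_combination (A i i * u ^ 2) * hσ + (A j j * u ^ 2) * hσ'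

lemma two_mul_mul_inv_sqrt_sq {t : ℝ} (ht : 0 < t) : 2 * t * ((√(2 * t))⁻¹) ^ 2 = 1 := by
  rw [inv_pow, Real.sq_sqrt (by positivity), mul_inv_cancel₀ (by positivity)]

lemma abs_mul_le_of_abs_le_mul {a b r u : ℝ} (h : |a| ≤ b * r) (hru : r * u = 1) (hu : 0 ≤ u) :
    |a * u| ≤ b := by
  rw [abs_mul, abs_of_nonneg hu]
  calc |a| * u ≤ b * r * u := by gcongr
    _ = b := by rw [mul_assoc, hru, mul_one]

lemma one_le_mul_sqrt_two_mul {M t : ℝ} (hM : 1 ≤ M) (hMt : 1 ≤ M * t) : 1 ≤ M * √(2 * t) := by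
  calc 1 ≤ √(2 * t * M ^ 2) := Real.one_le_sqrt.2 (by nlinarith)
    _ = M * √(2 * t) := by
      rw [Real.sqrt_mul' _ (sq_nonneg M), Real.sqrt_sq (by linarith), mul_comm]

lemma one_le_max_mul_of_isLeast {n : ℕ} {A : Matrix (Fin n) (Fin n) ℝ} {ε amin : ℝ} (hε : 0 < ε)
    (hamin : IsLeast {v : ℝ | ∃ i j : Fin n, i ≠ j ∧ v = |A i j|} amin) {i j : Fin n}
    (hij : i ≠ j) :
    1 ≤ max 1 (1 / (ε + amin)) * (ε + |A i j|) := by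
  obtain ⟨⟨k, l, -, rfl⟩, hle⟩ := hamin
  have hpos : 0 < ε + |A k l| := by positivity
  calc 1 = 1 / (ε + |A k l|) * (ε + |A k l|) := (one_div_mul_cancel hpos.ne').symm
    _ ≤ max 1 (1 / (ε + |A k l|)) * (ε + |A i j|) :=
      mul_le_mul (le_max_right _ _) (by linarith [hle ⟨i, j, hij, rfl⟩]) hpos.le (by positivity)

/-- `q` classifies the labelled set `S` with zero error; `axis` covers `S₂` and `pair` covers
`S₃`, `S₄` and `S₅`. -/
structure ClassifiesS {n : ℕ} (A : Matrix (Fin n) (Fin n) ℝ) (ε δ τ' τ γ : ℝ)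
    (q : (Fin n → ℝ) → ℝ → ℝ) : Prop where
  neg_at_one : q 0 1 < 0
  nonneg_at_neg_one : 0 ≤ q 0 (-1)
  neg_at_far : q 0 τ' < 0
  nonneg_at_neg_far : 0 ≤ q 0 (-τ')
  neg_at_two_mul : q 0 (2 * δ) < 0
  nonneg_at_neg_two_mul : 0 ≤ q 0 (-(2 * δ))
  axis : ∀ i : Fin n, ∀ σ : ℝ, σ = 1 ∨ σ = -1 →
    q ((σ * τ) • (Pi.single i 1 : Fin n → ℝ)) γ < 0 ∧
      0 ≤ q ((σ * τ) • (Pi.single i 1 : Fin n → ℝ)) (-γ)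
  pair : ∀ i j : Fin n, i ≠ j → ∀ σ σ' : ℝ, σ = 1 ∨ σ = -1 → σ' = 1 ∨ σ' = -1 →
    ∀ w : Fin n → ℝ,
      w = (σ / Real.sqrt (2 * (ε + |A i j|))) • (Pi.single i 1 : Fin n → ℝ) +
          (σ' / Real.sqrt (2 * (ε + |A i j|))) • (Pi.single j 1 : Fin n → ℝ) →
      q w 2 < 0 ∧ 0 ≤ q w (-2) ∧
      (σ * σ' * (if 0 ≤ A i j then (1 : ℝ) else -1) = 1 → 0 ≤ q ((2 : ℝ) • w) 1) ∧
      (σ * σ' * (if 0 ≤ A i j then (1 : ℝ) else -1) = -1 → q ((2 : ℝ) • w) 1 < 0)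

namespace ClassifiesS

variable {n : ℕ} {A : Matrix (Fin n) (Fin n) ℝ} {ε δ τ' τ γ : ℝ}

theorem div {q : (Fin n → ℝ) → ℝ → ℝ} (h : ClassifiesS A ε δ τ' τ γ q) {s : ℝ} (hs : 0 < s) :
    ClassifiesS A ε δ τ' τ γ (fun x z ↦ q x z / s) where
  neg_at_one := div_neg_of_neg_of_pos h.neg_at_one hs
  nonneg_at_neg_one := div_nonneg h.nonneg_at_neg_one hs.le
  neg_at_far := div_neg_of_neg_of_pos h.neg_at_far hs
  nonneg_at_neg_far := div_nonneg h.nonneg_at_neg_far hs.le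
  neg_at_two_mul := div_neg_of_neg_of_pos h.neg_at_two_mul hs
  nonneg_at_neg_two_mul := div_nonneg h.nonneg_at_neg_two_mul hs.le
  axis i σ hσ := (h.axis i σ hσ).imp (div_neg_of_neg_of_pos · hs) (div_nonneg · hs.le)
  pair i j hij σ σ' hσ hσ' w hw := by
    obtain ⟨h₁, h₂, h₃, h₄⟩ := h.pair i j hij σ σ' hσ hσ' w hw
    exact ⟨div_neg_of_neg_of_pos h₁ hs, div_nonneg h₂ hs.le, fun e ↦ div_nonneg (h₃ e) hs.le,
      fun e ↦ div_neg_of_neg_of_pos (h₄ e) hs⟩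

variable {A' : Matrix (Fin n) (Fin n) ℝ} {c₁ β : Fin n → ℝ} {c₂ c₄ : ℝ}

theorem abs_sq_coeff_mul_lt (h : ClassifiesS A ε δ τ' τ γ (q16 A' c₁ c₂ (-1) c₄ β))
    (hτ' : 1 ≤ τ') : |c₂| * (τ' - 1) < 1 := by
  have h₁ := h.neg_at_one
  have h₂ := h.nonneg_at_neg_one
  have h₃ := h.neg_at_far
  have h₄ := h.nonneg_at_neg_far
  simp only [q16_zero] at h₁ h₂ h₃ h₄
  rw [← abs_of_nonneg (sub_nonneg.2 hτ'), ← abs_mul, abs_lt]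
  constructor <;> nlinarith

theorem abs_const_le (h : ClassifiesS A ε δ τ' τ γ (q16 A' c₁ c₂ (-1) c₄ β))
    (hδ : 0 ≤ δ) (hδ' : δ ≤ 1 / 2) (hc₂ : |c₂| ≤ 1) : |c₄| ≤ 4 * δ := by
  have h₁ := h.neg_at_two_mul
  have h₂ := h.nonneg_at_neg_two_mul
  simp only [q16_zero] at h₁ h₂
  have : |c₂| * δ ^ 2 ≤ δ / 2 := by nlinarith
  rw [abs_le] at hc₂ ⊢
  constructor <;> nlinarith

theorem abs_mixed_mul_lt (h : ClassifiesS A ε δ τ' τ γ (q16 A' c₁ c₂ (-1) c₄ β))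
    (hτ : 0 ≤ τ) (hγ : 0 < γ) (i : Fin n) : |β i| * τ < 1 := by
  obtain ⟨h₁, h₂⟩ := h.axis i 1 (Or.inl rfl)
  obtain ⟨h₃, h₄⟩ := h.axis i (-1) (Or.inr rfl)
  simp only [q16_smul_single] at h₁ h₂ h₃ h₄
  rw [← abs_of_nonneg hτ, ← abs_mul, abs_lt]
  constructor <;> nlinarith

theorem abs_diag_mul_sq_le (h : ClassifiesS A ε δ τ' τ γ (q16 A' c₁ c₂ (-1) c₄ β)) (i : Fin n) :
    |A' i i| * τ ^ 2 ≤ γ + |c₂| * γ ^ 2 + |c₄| := by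
  obtain ⟨h₁, h₂⟩ := h.axis i 1 (Or.inl rfl)
  obtain ⟨h₃, h₄⟩ := h.axis i (-1) (Or.inr rfl)
  simp only [q16_smul_single] at h₁ h₂ h₃ h₄
  have hc₂ := abs_le.1 (show |c₂ * γ ^ 2| ≤ |c₂| * γ ^ 2 by rw [abs_mul, abs_sq])
  have hc₄ := abs_le.1 (le_refl |c₄|)
  rw [← abs_of_nonneg (sq_nonneg τ), ← abs_mul, abs_le]
  constructor <;> linarith

theorem pair_ineqs (h : ClassifiesS A ε δ τ' τ γ (q16 A' c₁ c₂ (-1) c₄ β)) (hA' : A'.IsSymm)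
    {i j : Fin n} (hij : i ≠ j) {u : ℝ} (hu : u = (√(2 * (ε + |A i j|)))⁻¹) {σ σ' : ℝ}
    (hσ : σ = 1 ∨ σ = -1) (hσ' : σ' = 1 ∨ σ' = -1) :
    (A' i i + A' j j) * u ^ 2 + 2 * σ * σ' * A' i j * u ^ 2 + (c₁ i * σ + c₁ j * σ') * u +
        4 * c₂ - 2 + c₄ + 2 * (β i * σ + β j * σ') * u < 0 ∧
      (σ * σ' * (if 0 ≤ A i j then 1 else -1) = 1 →
        0 ≤ 4 * (A' i i + A' j j) * u ^ 2 + 8 * σ * σ' * A' i j * u ^ 2 +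
          2 * (c₁ i * σ + c₁ j * σ') * u + c₂ - 1 + c₄ + 2 * (β i * σ + β j * σ') * u) := by
  have hsq : ∀ s : ℝ, s = 1 ∨ s = -1 → s ^ 2 = 1 := by rintro s (rfl | rfl) <;> norm_num
  have hw : (σ / √(2 * (ε + |A i j|))) • (Pi.single i 1 : Fin n → ℝ) +
      (σ' / √(2 * (ε + |A i j|))) • Pi.single j 1 =
        (σ * u) • Pi.single i 1 + (σ' * u) • Pi.single j 1 := by
    simp only [hu, div_eq_mul_inv]
  have h2w : (2 : ℝ) • ((σ * u) • (Pi.single i 1 : Fin n → ℝ) + (σ' * u) • Pi.single j 1) =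
      (σ * (2 * u)) • Pi.single i 1 + (σ' * (2 * u)) • Pi.single j 1 := by
    module
  obtain ⟨h₃, -, h₄, -⟩ := h.pair i j hij σ σ' hσ hσ' _ hw.symm
  rw [h2w, q16_pair hA' _ _ _ _ _ _ _ (hsq σ hσ) (hsq σ' hσ')] at h₄
  rw [q16_pair hA' _ _ _ _ _ _ _ (hsq σ hσ) (hsq σ' hσ')] at h₃
  exact ⟨by linarith, fun e ↦ by linarith [h₄ e]⟩

theorem abs_offDiag_le (h : ClassifiesS A ε δ τ' τ γ (q16 A' c₁ c₂ (-1) c₄ β)) (hA' : A'.IsSymm)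
    {i j : Fin n} (hij : i ≠ j) (hε : 0 < ε) (hc₂ : |c₂| ≤ ε / 20) (hc₄ : |c₄| ≤ 4 * δ)
    (hAi : |A' i i| ≤ ε / 40 * (2 * (ε + |A i j|)))
    (hAj : |A' j j| ≤ ε / 40 * (2 * (ε + |A i j|))) :
    |A' i j| ≤ (2 + 4 * δ + 5 * ε) * (ε + |A i j|) := by
  set t := ε + |A i j|
  set u := (√(2 * t))⁻¹ with hu
  have ht : 0 < t := by positivity
  have hu2 : 2 * t * u ^ 2 = 1 := two_mul_mul_inv_sqrt_sq ht
  have hAi' := abs_le.1 (abs_mul_le_of_abs_le_mul hAi hu2 (sq_nonneg u))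
  have hAj' := abs_le.1 (abs_mul_le_of_abs_le_mul hAj hu2 (sq_nonneg u))
  have hc₂' := abs_le.1 hc₂
  have hc₄' := abs_le.1 hc₄
  obtain ⟨hpp, -⟩ := h.pair_ineqs hA' hij hu (Or.inl rfl) (Or.inl rfl)
  obtain ⟨hmm, -⟩ := h.pair_ineqs hA' hij hu (Or.inr rfl) (Or.inr rfl)
  obtain ⟨hpm, -⟩ := h.pair_ineqs hA' hij hu (Or.inl rfl) (Or.inr rfl)
  obtain ⟨hmp, -⟩ := h.pair_ineqs hA' hij hu (Or.inr rfl) (Or.inl rfl)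
  have key : |A' i j * u ^ 2| ≤ 1 + 2 * δ + ε / 8 := by
    rw [abs_le]; constructor <;> linarith
  calc |A' i j| = 2 * t * |A' i j * u ^ 2| := by
        rw [abs_mul, abs_of_nonneg (sq_nonneg u)]; linear_combination (-|A' i j|) * hu2
    _ ≤ 2 * t * (1 + 2 * δ + ε / 8) := by gcongr
    _ ≤ (2 + 4 * δ + 5 * ε) * t := by nlinarith [mul_pos hε ht]

theorem le_abs_offDiag (h : ClassifiesS A ε δ τ' τ γ (q16 A' c₁ c₂ (-1) c₄ β)) (hA' : A'.IsSymm)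
    {i j : Fin n} (hij : i ≠ j) (hε : 0 < ε) (hc₂ : |c₂| ≤ ε / 20) (hc₄ : |c₄| ≤ 4 * δ)
    (hAi : |A' i i| ≤ ε / 40 * (2 * (ε + |A i j|)))
    (hAj : |A' j j| ≤ ε / 40 * (2 * (ε + |A i j|))) :
    (1 / 4 - δ - ε / 2) * (ε + |A i j|) ≤ |A' i j| := by
  set t := ε + |A i j|
  set u := (√(2 * t))⁻¹ with hu
  have ht : 0 < t := by positivity
  have hu2 : 2 * t * u ^ 2 = 1 := two_mul_mul_inv_sqrt_sq ht
  have hAi' := abs_le.1 (abs_mul_le_of_abs_le_mul hAi hu2 (sq_nonneg u))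
  have hAj' := abs_le.1 (abs_mul_le_of_abs_le_mul hAj hu2 (sq_nonneg u))
  have hc₂' := abs_le.1 hc₂
  have hc₄' := abs_le.1 hc₄
  have key : (1 - 4 * δ - ε / 4) / 8 ≤ |A' i j| * u ^ 2 := by
    rcases le_or_gt 0 (A i j) with hA | hA
    · have hp := (h.pair_ineqs hA' hij hu (Or.inl rfl) (Or.inl rfl)).2 (by simp [hA])
      have hm := (h.pair_ineqs hA' hij hu (Or.inr rfl) (Or.inr rfl)).2 (by simp [hA])
      linarith [mul_le_mul_of_nonneg_right (le_abs_self (A' i j)) (sq_nonneg u)]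
    · have hp := (h.pair_ineqs hA' hij hu (Or.inl rfl) (Or.inr rfl)).2 (by simp [hA.not_ge])
      have hm := (h.pair_ineqs hA' hij hu (Or.inr rfl) (Or.inl rfl)).2 (by simp [hA.not_ge])
      linarith [mul_le_mul_of_nonneg_right (neg_le_abs (A' i j)) (sq_nonneg u)]
  calc (1 / 4 - δ - ε / 2) * t ≤ 2 * t * ((1 - 4 * δ - ε / 4) / 8) := by nlinarith [mul_pos hε ht]
    _ ≤ 2 * t * (|A' i j| * u ^ 2) := by gcongr
    _ = |A' i j| := by linear_combination |A' i j| * hu2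

theorem abs_linear_le (h : ClassifiesS A ε δ τ' τ γ (q16 A' c₁ c₂ (-1) c₄ β)) (hA' : A'.IsSymm)
    {i j : Fin n} (hij : i ≠ j) (hε : 0 < ε) (hε' : ε ≤ 1 / 10) (hδ' : δ ≤ 1 / 10)
    (hc₂ : |c₂| ≤ ε / 20) (hc₄ : |c₄| ≤ 4 * δ)
    (hAi : |A' i i| ≤ ε / 40 * (2 * (ε + |A i j|)))
    (hAj : |A' j j| ≤ ε / 40 * (2 * (ε + |A i j|)))
    (hβ : |β i| ≤ ε / 20 * √(2 * (ε + |A i j|))) :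
    |c₁ i| ≤ 5 * √(2 * (ε + |A i j|)) := by
  set t := ε + |A i j|
  set u := (√(2 * t))⁻¹ with hu
  have ht : 0 < t := by positivity
  have hR : 0 < √(2 * t) := by positivity
  have hu2 : 2 * t * u ^ 2 = 1 := two_mul_mul_inv_sqrt_sq ht
  have hRu : √(2 * t) * u = 1 := mul_inv_cancel₀ hR.ne'
  have hAi' := abs_le.1 (abs_mul_le_of_abs_le_mul hAi hu2 (sq_nonneg u))
  have hAj' := abs_le.1 (abs_mul_le_of_abs_le_mul hAj hu2 (sq_nonneg u))
  have hβ' := abs_le.1 (abs_mul_le_of_abs_le_mul hβ hRu (inv_nonneg.2 hR.le))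
  have hc₂' := abs_le.1 hc₂
  have hc₄' := abs_le.1 hc₄
  obtain ⟨hpp, -⟩ := h.pair_ineqs hA' hij hu (Or.inl rfl) (Or.inl rfl)
  obtain ⟨hmm, -⟩ := h.pair_ineqs hA' hij hu (Or.inr rfl) (Or.inr rfl)
  obtain ⟨hpm, -⟩ := h.pair_ineqs hA' hij hu (Or.inl rfl) (Or.inr rfl)
  obtain ⟨hmp, -⟩ := h.pair_ineqs hA' hij hu (Or.inr rfl) (Or.inl rfl)
  have key : |c₁ i * u| ≤ 5 / 2 := by
    rw [abs_le]; constructor <;> linarith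
  calc |c₁ i| = |c₁ i * u| * √(2 * t) := by
        rw [abs_mul, abs_of_pos (inv_pos.2 hR)]; linear_combination (-|c₁ i|) * hRu
    _ ≤ 5 / 2 * √(2 * t) := by gcongr
    _ ≤ 5 * √(2 * t) := by linarith

theorem small_coeffs (h : ClassifiesS A ε δ τ' τ γ (q16 A' c₁ c₂ (-1) c₄ β)) (hn : 2 ≤ n)
    (hε : 0 < ε) (hε' : ε < 1 / 10) (hδ : 0 < δ) (hδ' : δ < 1 / 10) {M : ℝ} (hM : 1 ≤ M)
    (hτ' : 1000 * n ^ 2 * M ≤ ε * τ') (hτ : 1000 * n * M ≤ ε * τ) (hγ : γ = 4 * n * τ) :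
    |c₂| * (500 * n ^ 2 * M) ≤ ε ∧ |c₄| ≤ 4 * δ ∧
      (∀ i, |β i| * (20 * M) ≤ ε) ∧ (∀ i, |A' i i| * (20 * M) ≤ ε) := by
  have hn' : (2 : ℝ) ≤ n := by exact_mod_cast hn
  have hτ'1 : 1 ≤ τ' := by nlinarith
  have hτ1 : 1 ≤ τ := by nlinarith
  have hc₂τ' := h.abs_sq_coeff_mul_lt hτ'1
  have hc₂1 : |c₂| ≤ 1 := by nlinarith [abs_nonneg c₂]
  have hc₂ : |c₂| * (500 * n ^ 2 * M) ≤ ε := by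
    nlinarith [mul_le_mul_of_nonneg_left hτ' (abs_nonneg c₂)]
  have hc₄ := h.abs_const_le hδ.le (by linarith) hc₂1
  refine ⟨hc₂, hc₄, fun i ↦ ?_, fun i ↦ ?_⟩
  · have hβ := h.abs_mixed_mul_lt (by linarith) (by rw [hγ]; positivity) i
    nlinarith [mul_le_mul_of_nonneg_left hτ (abs_nonneg (β i)), abs_nonneg (β i)]
  · have hA := h.abs_diag_mul_sq_le i
    subst hγ
    have h₁ : 80 * n * M * τ ≤ 8 / 100 * ε * τ ^ 2 := by nlinarith
    have h₂ : |c₂| * (320 * n ^ 2 * M) * τ ^ 2 ≤ 64 / 100 * ε * τ ^ 2 := by nlinarith [sq_nonneg τ]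
    have h₃ : |c₄| * (20 * M) ≤ 1 / 100 * ε * τ ^ 2 := by
      have : ε * τ ≤ ε * τ ^ 2 := by
        nlinarith [mul_le_mul_of_nonneg_left hτ1 (by positivity : 0 ≤ ε * τ)]
      nlinarith
    have : |A' i i| * (20 * M) * τ ^ 2 ≤ ε * τ ^ 2 := by nlinarith
    exact le_of_mul_le_mul_right this (by positivity)

theorem coeff_bounds (h : ClassifiesS A ε δ τ' τ γ (q16 A' c₁ c₂ (-1) c₄ β)) (hA' : A'.IsSymm)
    (hn : 2 ≤ n) (hε : 0 < ε) (hε' : ε < 1 / 10) (hδ : 0 < δ) (hδ' : δ < 1 / 10) {M : ℝ}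
    (hM : 1 ≤ M) (hMA : ∀ i j, i ≠ j → 1 ≤ M * (ε + |A i j|))
    (hτ' : 1000 * n ^ 2 * M ≤ ε * τ') (hτ : 1000 * n * M ≤ ε * τ) (hγ : γ = 4 * n * τ) :
    |c₂| ≤ ε ∧ (∀ i, |β i| ≤ ε) ∧ (∀ i, |A' i i| ≤ ε) ∧ |c₄| ≤ 4 * δ ∧
      (∀ i j, i ≠ j → (1 / 4 - δ - ε / 2) * (ε + |A i j|) ≤ |A' i j| ∧
        |A' i j| ≤ (2 + 4 * δ + 5 * ε) * (ε + |A i j|)) ∧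
      (∀ i j, j ≠ i → |c₁ i| ≤ 5 * √(2 * (ε + |A i j|))) := by
  obtain ⟨hc₂, hc₄, hβ, hAd⟩ := h.small_coeffs hn hε hε' hδ hδ' hM hτ' hτ hγ
  have hn' : (2 : ℝ) ≤ n := by exact_mod_cast hn
  have hc₂' : |c₂| ≤ ε / 20 := by
    have : (20 : ℝ) ≤ 500 * n ^ 2 * M := by nlinarith
    nlinarith [mul_le_mul_of_nonneg_left this (abs_nonneg c₂)]
  have hAd' : ∀ i j, i ≠ j → ∀ k, |A' k k| ≤ ε / 40 * (2 * (ε + |A i j|)) := fun i j hij k ↦ by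
    nlinarith [mul_le_mul_of_nonneg_left (hMA i j hij) (abs_nonneg (A' k k)),
      mul_le_mul_of_nonneg_right (hAd k) (by positivity : (0 : ℝ) ≤ ε + |A i j|)]
  have hβ' : ∀ i j, i ≠ j → |β i| ≤ ε / 20 * √(2 * (ε + |A i j|)) := fun i j hij ↦ by
    nlinarith [mul_le_mul_of_nonneg_left (one_le_mul_sqrt_two_mul hM (hMA i j hij))
      (abs_nonneg (β i)), mul_le_mul_of_nonneg_right (hβ i) (Real.sqrt_nonneg (2 * (ε + |A i j|)))]
  refine ⟨by linarith, fun i ↦ by nlinarith [hβ i, abs_nonneg (β i)],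
    fun i ↦ by nlinarith [hAd i, abs_nonneg (A' i i)], hc₄,
    fun i j hij ↦ ⟨?_, ?_⟩, fun i j hji ↦ ?_⟩
  · exact h.le_abs_offDiag hA' hij hε hc₂' hc₄ (hAd' i j hij i) (hAd' i j hij j)
  · exact h.abs_offDiag_le hA' hij hε hc₂' hc₄ (hAd' i j hij i) (hAd' i j hij j)
  · exact h.abs_linear_le hA' hji.symm hε hε'.le hδ'.le hc₂' hc₄ (hAd' i j hji.symm i)
      (hAd' i j hji.symm j) (hβ' i j hji.symm)

end ClassifiesS

/-- There is a universal constant `K > 0` such that whenever a degree-2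
polynomial `q'` (with symmetric quadratic part `A''`, linear part `c₁''`,
`z²`-coefficient `c₂''`, `z`-coefficient `c_z`, constant `c₄''` and mixed part `β''`)
correctly classifies the labeled set `S` described in the statement (built from a
symmetric zero-diagonal matrix `A`, parameters `ε, δ ∈ (0, 1/10)`, and scales
`τ' ≥ K(n²/ε)·M`, `τ ≥ K(n/ε)·M`, `γ = 4nτ` where
`M = max(1, 1/(ε + min_{i≠j}|a_{ij}|))`), then `c_z < 0` and the coefficients of the
normalized polynomial `q = q'/(−c_z)` satisfy the stated bounds. Labels `+1`
correspond to `q' ≥ 0` and labels `−1` to `q' < 0`; `sgn(a_{ij})` is `1` if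
`a_{ij} ≥ 0` and `−1` otherwise; `Pi.single i 1` is the `i`-th standard basis
vector `e_i`. -/
theorem stmt_16 : ∃ K : ℝ, 0 < K ∧
    ∀ (n : ℕ), 2 ≤ n →
    ∀ A : Matrix (Fin n) (Fin n) ℝ, A.IsSymm → (∀ i, A i i = 0) →
    ∀ ε δ : ℝ, 0 < ε → ε < 1 / 10 → 0 < δ → δ < 1 / 10 →
    ∀ amin : ℝ, IsLeast {v : ℝ | ∃ i j : Fin n, i ≠ j ∧ v = |A i j|} amin →
    ∀ τ' τ γ : ℝ,
      K * ((n : ℝ) ^ 2 / ε) * max 1 (1 / (ε + amin)) ≤ τ' →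
      K * ((n : ℝ) / ε) * max 1 (1 / (ε + amin)) ≤ τ →
      γ = 4 * n * τ →
    ∀ (A'' : Matrix (Fin n) (Fin n) ℝ) (c₁'' : Fin n → ℝ) (c₂'' cz c₄'' : ℝ)
      (β'' : Fin n → ℝ), A''.IsSymm →
      -- the points of S₁
      q16 A'' c₁'' c₂'' cz c₄'' β'' 0 1 < 0 →
      0 ≤ q16 A'' c₁'' c₂'' cz c₄'' β'' 0 (-1) →
      q16 A'' c₁'' c₂'' cz c₄'' β'' 0 τ' < 0 →
      0 ≤ q16 A'' c₁'' c₂'' cz c₄'' β'' 0 (-τ') →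
      q16 A'' c₁'' c₂'' cz c₄'' β'' 0 (2 * δ) < 0 →
      0 ≤ q16 A'' c₁'' c₂'' cz c₄'' β'' 0 (-(2 * δ)) →
      -- the points of S₂: `(±τ eᵢ, ±γ)`
      (∀ i : Fin n, ∀ σ : ℝ, σ = 1 ∨ σ = -1 →
        q16 A'' c₁'' c₂'' cz c₄'' β'' ((σ * τ) • (Pi.single i 1 : Fin n → ℝ)) γ < 0 ∧
        0 ≤ q16 A'' c₁'' c₂'' cz c₄'' β'' ((σ * τ) • (Pi.single i 1 : Fin n → ℝ)) (-γ)) →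
      -- the points of S₃, S₄, S₅: built on `w = (σ/√(2ã_{ij}))eᵢ + (σ'/√(2ã_{ij}))eⱼ`
      (∀ i j : Fin n, i ≠ j → ∀ σ σ' : ℝ, σ = 1 ∨ σ = -1 → σ' = 1 ∨ σ' = -1 →
        ∀ w : Fin n → ℝ,
          w = (σ / Real.sqrt (2 * (ε + |A i j|))) • (Pi.single i 1 : Fin n → ℝ) +
              (σ' / Real.sqrt (2 * (ε + |A i j|))) • (Pi.single j 1 : Fin n → ℝ) →
          q16 A'' c₁'' c₂'' cz c₄'' β'' w 2 < 0 ∧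
          0 ≤ q16 A'' c₁'' c₂'' cz c₄'' β'' w (-2) ∧
          (σ * σ' * (if 0 ≤ A i j then (1 : ℝ) else -1) = 1 →
            0 ≤ q16 A'' c₁'' c₂'' cz c₄'' β'' ((2 : ℝ) • w) 1) ∧
          (σ * σ' * (if 0 ≤ A i j then (1 : ℝ) else -1) = -1 →
            q16 A'' c₁'' c₂'' cz c₄'' β'' ((2 : ℝ) • w) 1 < 0)) →
      -- conclusions
      cz < 0 ∧
      |c₂'' / (-cz)| ≤ ε ∧
      (∀ i, |β'' i / (-cz)| ≤ ε) ∧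
      (∀ i, |A'' i i / (-cz)| ≤ ε) ∧
      |c₄'' / (-cz)| ≤ 4 * δ ∧
      (∀ i j : Fin n, i ≠ j →
        (1 / 4 - δ - ε / 2) * (ε + |A i j|) ≤ |A'' i j / (-cz)| ∧
        |A'' i j / (-cz)| ≤ (2 + 4 * δ + 5 * ε) * (ε + |A i j|)) ∧
      (∀ i j : Fin n, j ≠ i →
        |c₁'' i / (-cz)| ≤ 5 * Real.sqrt (2 * (ε + |A i j|))) := by
  refine ⟨1000, by norm_num, ?_⟩
  intro n hn A _ _ ε δ hε hε' hδ hδ' amin hamin τ' τ γ hτ' hτ hγ A'' c₁'' c₂'' cz c₄'' β'' hA''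
    h₁ h₂ h₃ h₄ h₅ h₆ hS₂ hS₃₄₅
  have hcz : cz < 0 := by rw [q16_zero] at h₁ h₂; linarith
  have hS : ClassifiesS A ε δ τ' τ γ (q16 A'' c₁'' c₂'' cz c₄'' β'') :=
    ⟨h₁, h₂, h₃, h₄, h₅, h₆, hS₂, hS₃₄₅⟩
  have hS' := hS.div (neg_pos.2 hcz)
  rw [q16_div, div_neg_self hcz.ne] at hS'
  have hscale : ∀ a t : ℝ, 1000 * (a / ε) * max 1 (1 / (ε + amin)) ≤ t →
      1000 * a * max 1 (1 / (ε + amin)) ≤ ε * t := fun a t h ↦ by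
    calc 1000 * a * max 1 (1 / (ε + amin)) = ε * (1000 * (a / ε) * max 1 (1 / (ε + amin))) := by
          field_simp
      _ ≤ ε * t := by gcongr
  obtain ⟨hc₂, hβ, hAd, hc₄, hA, hc₁⟩ := hS'.coeff_bounds (hA''.smul _) hn hε hε' hδ hδ'
    (le_max_left _ _) (fun i j hij ↦ one_le_max_mul_of_isLeast hε hamin hij) (hscale _ _ hτ')
    (hscale _ _ hτ) hγ
  simp only [Matrix.smul_apply, Pi.smul_apply, smul_eq_mul, inv_mul_eq_div] at hβ hAd hA hc₁
  exact ⟨hcz, hc₂, hβ, hAd, hc₄, hA, hc₁⟩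
end
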